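/- Let N ≥ 2 and let Λ ⊂ ℤ² be a finite set written as a disjoint union of generations Λ = Λ₁ ∪ … ∪ Λ_N satisfying Properties II–VI. Let b : ℝ → ℂ^N solve the Toy Model System on ℂ^N. Define r : ℝ → (ℤ² → ℂ) by r_n(t) = b_j(t) for n ∈ Λ_j (1 ≤ j ≤ N) and r_n(t) = 0 for n ∉ Λ. Then r is a solution of the resonant system RFNLS, i.e. −i ∂_t r_n(t) = −r_n(t)|r_n(t)|² + Σ_{(n₁,n₂,n₃) ∈ Γ_res(n)} r_{n₁}(t) conj(r_{n₂}(t)) r_{n₃}(t) for every n ∈ ℤ² and t ∈ ℝ. -/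

import Mathlib

/-! At `n ∈ Λ_j`, a resonant term `r_{n₁} conj(r_{n₂}) r_{n₃}` is nonzero only if `n₁, n₂, n₃ ∈ Λ`;
then `(n₁, n₂, n₃, n)` is a rectangle in `Λ`, hence (faithfulness) a nuclear family, in which `n` is
either a child or a parent. By Properties III and IV each role is played in exactly one family, and
each family yields two ordered triples: `(parent, sibling, parent)` contributing
`2 b_{j-1}² conj(b_j)` and `(child, spouse, child)` contributing `2 b_{j+1}² conj(b_j)`. Together with
`−|b_j|² b_j` this is the Toy Model System. At `n ∉ Λ` closure (II) kills every resonant term. -/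

open scoped BigOperators ENNReal

noncomputable section

/-- The squared Euclidean length of a lattice point `n ∈ ℤ²`. -/
def nsq (n : ℤ × ℤ) : ℤ := n.1 ^ 2 + n.2 ^ 2

/-- The set `Γ(n)` of non-self interactions at frequency `n`. -/
def Gam (n : ℤ × ℤ) : Set ((ℤ × ℤ) × (ℤ × ℤ) × (ℤ × ℤ)) :=
  {p | p.1 - p.2.1 + p.2.2 = n ∧ p.1 ≠ n ∧ p.2.2 ≠ n}

/-- `ω₄ = |n₁|² − |n₂|² + |n₃|² − |n|²`. -/
def omega4 (n : ℤ × ℤ) (p : (ℤ × ℤ) × (ℤ × ℤ) × (ℤ × ℤ)) : ℤ :=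
  nsq p.1 - nsq p.2.1 + nsq p.2.2 - nsq n

/-- The set `Γ_res(n)` of resonant non-self interactions at frequency `n`. -/
def GamRes (n : ℤ × ℤ) : Set ((ℤ × ℤ) × (ℤ × ℤ) × (ℤ × ℤ)) :=
  {p | p ∈ Gam n ∧ omega4 n p = 0}

/-- The right-hand side of the resonant system `RFNLS`:
`−r_n |r_n|² + Σ_{Γ_res(n)} r_{n₁} conj(r_{n₂}) r_{n₃}`. -/
def resRHS (r : (ℤ × ℤ) → ℂ) (n : ℤ × ℤ) : ℂ :=
  -(r n * (‖r n‖ : ℂ) ^ 2) +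
    ∑' p : GamRes n, r (↑p : (ℤ × ℤ) × (ℤ × ℤ) × (ℤ × ℤ)).1 *
      (starRingEnd ℂ) (r (↑p : (ℤ × ℤ) × (ℤ × ℤ) × (ℤ × ℤ)).2.1) *
      r (↑p : (ℤ × ℤ) × (ℤ × ℤ) × (ℤ × ℤ)).2.2

/-- A rectangle in `ℤ²`: `n₁,n₃` and `n₂,n₄` are pairs of opposite vertices. -/
def IsRect (n₁ n₂ n₃ n₄ : ℤ × ℤ) : Prop :=
  n₁ - n₂ + n₃ - n₄ = 0 ∧ nsq n₁ - nsq n₂ + nsq n₃ - nsq n₄ = 0 ∧ n₂ ≠ n₁ ∧ n₂ ≠ n₃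

/-- A nuclear family connecting generation `j` to generation `j+1`:
the parents `n₁, n₃` lie in `Λ_j` and the children `n₂, n₄` lie in `Λ_{j+1}`. -/
def NukFam (Λgen : ℕ → Finset (ℤ × ℤ)) (j : ℕ) (n₁ n₂ n₃ n₄ : ℤ × ℤ) : Prop :=
  IsRect n₁ n₂ n₃ n₄ ∧ n₁ ∈ Λgen j ∧ n₃ ∈ Λgen j ∧ n₂ ∈ Λgen (j + 1) ∧ n₄ ∈ Λgen (j + 1)

/-- Membership in `Λ = Λ₁ ∪ … ∪ Λ_N`. -/
def InLam (N : ℕ) (Λgen : ℕ → Finset (ℤ × ℤ)) (n : ℤ × ℤ) : Prop :=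
  ∃ j, 1 ≤ j ∧ j ≤ N ∧ n ∈ Λgen j

/-- Property II (closure): if three vertices of a rectangle lie in `Λ`, so does the fourth. -/
def PropII (N : ℕ) (Λgen : ℕ → Finset (ℤ × ℤ)) : Prop :=
  ∀ n₁ n₂ n₃ n₄ : ℤ × ℤ, IsRect n₁ n₂ n₃ n₄ →
    ((InLam N Λgen n₁ ∧ InLam N Λgen n₂ ∧ InLam N Λgen n₃) ∨
     (InLam N Λgen n₁ ∧ InLam N Λgen n₂ ∧ InLam N Λgen n₄) ∨
     (InLam N Λgen n₁ ∧ InLam N Λgen n₃ ∧ InLam N Λgen n₄) ∨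
     (InLam N Λgen n₂ ∧ InLam N Λgen n₃ ∧ InLam N Λgen n₄)) →
    InLam N Λgen n₁ ∧ InLam N Λgen n₂ ∧ InLam N Λgen n₃ ∧ InLam N Λgen n₄

/-- Property III (existence and uniqueness of spouse and children). -/
def PropIII (N : ℕ) (Λgen : ℕ → Finset (ℤ × ℤ)) : Prop :=
  ∀ j, 1 ≤ j → j < N → ∀ n₁ ∈ Λgen j,
    ∃ n₂ n₃ n₄ : ℤ × ℤ, NukFam Λgen j n₁ n₂ n₃ n₄ ∧
      ∀ m₂ m₃ m₄ : ℤ × ℤ, NukFam Λgen j n₁ m₂ m₃ m₄ →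
        m₃ = n₃ ∧ ({m₂, m₄} : Set (ℤ × ℤ)) = {n₂, n₄}

/-- Property IV (existence and uniqueness of sibling and parents). -/
def PropIV (N : ℕ) (Λgen : ℕ → Finset (ℤ × ℤ)) : Prop :=
  ∀ j, 1 ≤ j → j < N → ∀ n₂ ∈ Λgen (j + 1),
    ∃ n₁ n₃ n₄ : ℤ × ℤ, NukFam Λgen j n₁ n₂ n₃ n₄ ∧
      ∀ m₁ m₃ m₄ : ℤ × ℤ, NukFam Λgen j m₁ n₂ m₃ m₄ →
        m₄ = n₄ ∧ ({m₁, m₃} : Set (ℤ × ℤ)) = {n₁, n₃}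

/-- Property V (nondegeneracy): the sibling of a frequency is never its spouse. -/
def PropV (Λgen : ℕ → Finset (ℤ × ℤ)) : Prop :=
  ∀ (j j' : ℕ) (n c₁ sp c₂ p₁ p₂ sib : ℤ × ℤ),
    NukFam Λgen j n c₁ sp c₂ → NukFam Λgen j' p₁ n p₂ sib → sib ≠ sp

/-- Property VI (faithfulness): the only rectangles in `Λ` are the nuclear families. -/
def PropVI (N : ℕ) (Λgen : ℕ → Finset (ℤ × ℤ)) : Prop :=
  ∀ n₁ n₂ n₃ n₄ : ℤ × ℤ, InLam N Λgen n₁ → InLam N Λgen n₂ → InLam N Λgen n₃ →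
    InLam N Λgen n₄ → IsRect n₁ n₂ n₃ n₄ →
    ∃ j, NukFam Λgen j n₁ n₂ n₃ n₄ ∨ NukFam Λgen j n₂ n₁ n₄ n₃

/-- The right-hand side of the Toy Model System (with `b 0 = 0` by convention). -/
def toyRHS (b : ℕ → ℂ) (j : ℕ) : ℂ :=
  -Complex.I * (‖b j‖ : ℂ) ^ 2 * b j +
    2 * Complex.I * (starRingEnd ℂ) (b j) * (b (j - 1) ^ 2 + b (j + 1) ^ 2)

/-- `b` solves the Toy Model System on `ℂ^N` (encoded as `b : ℝ → ℕ → ℂ` vanishing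
outside indices `1,…,N`, so that `b₀ = b_{N+1} = 0` automatically). -/
def IsToySol (N : ℕ) (b : ℝ → ℕ → ℂ) : Prop :=
  (∀ t, b t 0 = 0) ∧ (∀ t, ∀ j, N < j → b t j = 0) ∧
    ∀ j, 1 ≤ j → j ≤ N → ∀ t, HasDerivAt (fun s => b s j) (toyRHS (b t) j) t

open Finset ComplexConjugate

abbrev Triple := (ℤ × ℤ) × (ℤ × ℤ) × (ℤ × ℤ)

-- Equality case of the parallelogram law.
theorem eq_of_add_eq_of_nsq_add_eq {a b c : ℤ × ℤ} (h : b + c = a + a)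
    (hq : nsq b + nsq c = 2 * nsq a) : b = a := by
  obtain ⟨h₁, h₂⟩ := Prod.ext_iff.mp h
  simp only [nsq, Prod.fst_add, Prod.snd_add] at h₁ h₂ hq
  have hsq : (b.1 - a.1) ^ 2 + (b.2 - a.2) ^ 2 = 0 := by
    rw [show c.1 = 2 * a.1 - b.1 by linarith, show c.2 = 2 * a.2 - b.2 by linarith] at hq
    linarith
  ext <;> nlinarith [sq_nonneg (b.1 - a.1), sq_nonneg (b.2 - a.2)]

namespace IsRect

variable {n₁ n₂ n₃ n₄ : ℤ × ℤ}

theorem fourth_ne_first (h : IsRect n₁ n₂ n₃ n₄) : n₄ ≠ n₁ := by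
  rintro rfl
  exact h.2.2.2 (by linear_combination -h.1)

theorem fourth_ne_third (h : IsRect n₁ n₂ n₃ n₄) : n₄ ≠ n₃ := by
  rintro rfl
  exact h.2.2.1 (by linear_combination -h.1)

theorem first_ne_third (h : IsRect n₁ n₂ n₃ n₄) : n₁ ≠ n₃ := by
  rintro rfl
  exact h.2.2.1
    (eq_of_add_eq_of_nsq_add_eq (c := n₄) (by linear_combination -h.1) (by linarith [h.2.1]))

theorem second_ne_fourth (h : IsRect n₁ n₂ n₃ n₄) : n₂ ≠ n₄ := by
  rintro rfl
  exact h.2.2.1.symm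
    (eq_of_add_eq_of_nsq_add_eq (c := n₃) (by linear_combination h.1) (by linarith [h.2.1]))

theorem swap_parents (h : IsRect n₁ n₂ n₃ n₄) : IsRect n₃ n₂ n₁ n₄ :=
  ⟨by linear_combination h.1, by linarith [h.2.1], h.2.2.2, h.2.2.1⟩

theorem swap_children (h : IsRect n₁ n₂ n₃ n₄) : IsRect n₁ n₄ n₃ n₂ :=
  ⟨by linear_combination h.1, by linarith [h.2.1], h.fourth_ne_first, h.fourth_ne_third⟩

theorem swap_pairs (h : IsRect n₁ n₂ n₃ n₄) : IsRect n₂ n₁ n₄ n₃ :=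
  ⟨by linear_combination -h.1, by linarith [h.2.1], h.2.2.1.symm, h.fourth_ne_first.symm⟩

end IsRect

theorem mem_gamRes_iff {n : ℤ × ℤ} {p : Triple} :
    p ∈ GamRes n ↔ IsRect p.1 p.2.1 p.2.2 n ∧ p.1 ≠ n ∧ p.2.2 ≠ n := by
  constructor
  · rintro ⟨⟨hsum, h₁, h₃⟩, hres⟩
    refine ⟨⟨by rw [← hsum]; ring, hres, ?_, ?_⟩, h₁, h₃⟩
    · rintro h
      exact h₃ (by rw [← hsum, h]; ring)
    · rintro h
      exact h₁ (by rw [← hsum, h]; ring)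
  · rintro ⟨h, h₁, h₃⟩
    exact ⟨⟨by linear_combination h.1, h₁, h₃⟩, h.2.1⟩

namespace NukFam

variable {Λgen : ℕ → Finset (ℤ × ℤ)} {j : ℕ} {n₁ n₂ n₃ n₄ : ℤ × ℤ}

theorem swap_parents (h : NukFam Λgen j n₁ n₂ n₃ n₄) : NukFam Λgen j n₃ n₂ n₁ n₄ :=
  ⟨h.1.swap_parents, h.2.2.1, h.2.1, h.2.2.2.1, h.2.2.2.2⟩

theorem swap_children (h : NukFam Λgen j n₁ n₂ n₃ n₄) : NukFam Λgen j n₁ n₄ n₃ n₂ :=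
  ⟨h.1.swap_children, h.2.1, h.2.2.1, h.2.2.2.2, h.2.2.2.1⟩

end NukFam

theorem tsum_subtype_eq_sum {β α : Type*} [AddCommMonoid α] [TopologicalSpace α] {s : Set β}
    {S : Finset β} {f : β → α} (hS : ↑S ⊆ s) (hf : ∀ p ∈ s, f p ≠ 0 → p ∈ S) :
    ∑' p : s, f p = ∑ p ∈ S, f p := by
  rw [_root_.tsum_subtype, tsum_eq_sum' fun p hp => ?_]
  · exact sum_congr rfl fun p hp => Set.indicator_of_mem (hS hp) f
  · rw [Function.mem_support, Set.indicator_apply_ne_zero] at hp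
    exact hf p hp.1 hp.2

section Generations

variable {N : ℕ} {Λgen : ℕ → Finset (ℤ × ℤ)} {j : ℕ} {m n : ℤ × ℤ}

theorem one_le_and_le_of_mem (hempty : ∀ j, j = 0 ∨ N < j → Λgen j = ∅) (hm : m ∈ Λgen j) :
    1 ≤ j ∧ j ≤ N := by
  by_contra h
  rw [hempty j (by omega)] at hm
  exact notMem_empty m hm

theorem inLam_of_mem (hempty : ∀ j, j = 0 ∨ N < j → Λgen j = ∅) (hm : m ∈ Λgen j) :
    InLam N Λgen m :=
  ⟨j, one_le_and_le_of_mem hempty hm |>.1, one_le_and_le_of_mem hempty hm |>.2, hm⟩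

theorem eq_of_mem_of_mem (hdisj : ∀ j k, j ≠ k → Disjoint (Λgen j) (Λgen k)) {k : ℕ}
    (hj : m ∈ Λgen j) (hk : m ∈ Λgen k) : j = k := by
  by_contra h
  exact disjoint_left.mp (hdisj j k h) hj hk

/- The resonant triples at `n` coming from the nuclear family in which `n` is a child (resp. a
parent). The products of generations only make these sets visibly finite: membership is decided by
the nuclear-family condition alone (`mem_childTriples`, `mem_parentTriples`). -/
open Classical in
def childTriples (Λgen : ℕ → Finset (ℤ × ℤ)) (j : ℕ) (n : ℤ × ℤ) : Finset Triple :=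
  (Λgen j ×ˢ Λgen (j + 1) ×ˢ Λgen j).filter fun p => NukFam Λgen j p.1 p.2.1 p.2.2 n

open Classical in
def parentTriples (Λgen : ℕ → Finset (ℤ × ℤ)) (j : ℕ) (n : ℤ × ℤ) : Finset Triple :=
  (Λgen (j + 1) ×ˢ Λgen j ×ˢ Λgen (j + 1)).filter fun p => NukFam Λgen j p.2.1 p.1 n p.2.2

theorem mem_childTriples {p : Triple} :
    p ∈ childTriples Λgen j n ↔ NukFam Λgen j p.1 p.2.1 p.2.2 n := by
  simp only [childTriples, mem_filter, mem_product, and_iff_right_iff_imp]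
  exact fun h => ⟨h.2.1, h.2.2.2.1, h.2.2.1⟩

theorem mem_parentTriples {p : Triple} :
    p ∈ parentTriples Λgen j n ↔ NukFam Λgen j p.2.1 p.1 n p.2.2 := by
  simp only [parentTriples, mem_filter, mem_product, and_iff_right_iff_imp]
  exact fun h => ⟨h.2.2.2.1, h.2.1, h.2.2.2.2⟩

theorem childTriples_subset_gamRes : ↑(childTriples Λgen j n) ⊆ GamRes n := fun _ hp => by
  have h := (mem_childTriples.mp hp).1
  exact mem_gamRes_iff.mpr ⟨h, h.fourth_ne_first.symm, h.fourth_ne_third.symm⟩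

theorem parentTriples_subset_gamRes : ↑(parentTriples Λgen j n) ⊆ GamRes n := fun _ hp => by
  have h := (mem_parentTriples.mp hp).1
  exact mem_gamRes_iff.mpr ⟨h.swap_pairs, h.2.2.2, h.fourth_ne_third⟩

theorem disjoint_childTriples_parentTriples
    (hdisj : ∀ j k, j ≠ k → Disjoint (Λgen j) (Λgen k)) :
    Disjoint (childTriples Λgen j n) (parentTriples Λgen (j + 1) n) := by
  refine disjoint_left.mpr fun p hc hp => ?_
  have := eq_of_mem_of_mem hdisj (mem_childTriples.mp hc).2.1 (mem_parentTriples.mp hp).2.2.2.1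
  omega

theorem card_childTriples (hIV : PropIV N Λgen) (hj : 1 ≤ j) (hjN : j < N)
    (hn : n ∈ Λgen (j + 1)) : #(childTriples Λgen j n) = 2 := by
  obtain ⟨pa, pc, sib, hfam, huniq⟩ := hIV j hj hjN n hn
  have hpair : childTriples Λgen j n = {(pa, sib, pc), (pc, sib, pa)} := by
    ext ⟨p₁, p₂, p₃⟩
    rw [mem_childTriples, mem_insert, mem_singleton]
    constructor
    · intro h
      obtain ⟨rfl, hparents⟩ := huniq p₁ p₃ p₂ h.swap_children
      rcases Set.pair_eq_pair_iff.mp hparents with ⟨rfl, rfl⟩ | ⟨rfl, rfl⟩ <;> simp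
    · rintro (h | h) <;> simp only [Prod.mk.injEq] at h <;> obtain ⟨rfl, rfl, rfl⟩ := h
      · exact hfam.swap_children
      · exact hfam.swap_children.swap_parents
  rw [hpair, card_pair (by simp [hfam.1.first_ne_third])]

theorem card_parentTriples (hIII : PropIII N Λgen) (hj : 1 ≤ j) (hjN : j < N)
    (hn : n ∈ Λgen j) : #(parentTriples Λgen j n) = 2 := by
  obtain ⟨c₁, sp, c₂, hfam, huniq⟩ := hIII j hj hjN n hn
  have hpair : parentTriples Λgen j n = {(c₁, sp, c₂), (c₂, sp, c₁)} := by
    ext ⟨p₁, p₂, p₃⟩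
    rw [mem_parentTriples, mem_insert, mem_singleton]
    constructor
    · intro h
      obtain ⟨rfl, hchildren⟩ := huniq p₁ p₂ p₃ h.swap_parents
      rcases Set.pair_eq_pair_iff.mp hchildren with ⟨rfl, rfl⟩ | ⟨rfl, rfl⟩ <;> simp
    · rintro (h | h) <;> simp only [Prod.mk.injEq] at h <;> obtain ⟨rfl, rfl, rfl⟩ := h
      · exact hfam.swap_parents
      · exact hfam.swap_parents.swap_children
  rw [hpair, card_pair (by simp [hfam.1.second_ne_fourth])]

end Generations

def resTerm (c : ℤ × ℤ → ℂ) (p : Triple) : ℂ := c p.1 * conj (c p.2.1) * c p.2.2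

theorem resRHS_eq (c : ℤ × ℤ → ℂ) (n : ℤ × ℤ) :
    resRHS c n = -(c n * (‖c n‖ : ℂ) ^ 2) + ∑' p : GamRes n, resTerm c p :=
  rfl

section Spread

variable {N : ℕ} {Λgen : ℕ → Finset (ℤ × ℤ)} {c : ℤ × ℤ → ℂ} {a : ℕ → ℂ} {j : ℕ} {n : ℤ × ℤ}

theorem inLam_of_resTerm_ne_zero (hempty : ∀ j, j = 0 ∨ N < j → Λgen j = ∅)
    (hc0 : ∀ m, (∀ j, m ∉ Λgen j) → c m = 0) {p : Triple} (hp : resTerm c p ≠ 0) :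
    InLam N Λgen p.1 ∧ InLam N Λgen p.2.1 ∧ InLam N Λgen p.2.2 := by
  have hΛ : ∀ m, c m ≠ 0 → InLam N Λgen m := fun m hm => by
    by_contra h
    exact hm (hc0 m fun j hj => h (inLam_of_mem hempty hj))
  simp only [resTerm, ne_eq, mul_eq_zero, map_eq_zero, not_or] at hp
  exact ⟨hΛ _ hp.1.1, hΛ _ hp.1.2, hΛ _ hp.2⟩

theorem mem_triples_of_resTerm_ne_zero (hempty : ∀ j, j = 0 ∨ N < j → Λgen j = ∅)
    (hdisj : ∀ j k, j ≠ k → Disjoint (Λgen j) (Λgen k)) (hVI : PropVI N Λgen)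
    (hc0 : ∀ m, (∀ j, m ∉ Λgen j) → c m = 0) (hn : n ∈ Λgen (j + 1)) {p : Triple}
    (hp : p ∈ GamRes n) (hne : resTerm c p ≠ 0) :
    p ∈ childTriples Λgen j n ∪ parentTriples Λgen (j + 1) n := by
  obtain ⟨h₁, h₂, h₃⟩ := inLam_of_resTerm_ne_zero hempty hc0 hne
  obtain ⟨j', hfam | hfam⟩ :=
    hVI _ _ _ _ h₁ h₂ h₃ (inLam_of_mem hempty hn) (mem_gamRes_iff.mp hp).1
  · obtain rfl : j' = j := by
      have := eq_of_mem_of_mem hdisj hfam.2.2.2.2 hn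
      omega
    exact mem_union_left _ (mem_childTriples.mpr hfam)
  · obtain rfl : j' = j + 1 := eq_of_mem_of_mem hdisj hfam.2.2.1 hn
    exact mem_union_right _ (mem_parentTriples.mpr hfam)

theorem sum_childTriples (hIV : PropIV N Λgen) (hca : ∀ j m, m ∈ Λgen j → c m = a j)
    (ha0 : a 0 = 0) (hjN : j < N) (hn : n ∈ Λgen (j + 1)) :
    ∑ p ∈ childTriples Λgen j n, resTerm c p = 2 * (a j ^ 2 * conj (a (j + 1))) := by
  have hterm : ∀ p ∈ childTriples Λgen j n, resTerm c p = a j ^ 2 * conj (a (j + 1)) := by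
    intro p hp
    have h := mem_childTriples.mp hp
    rw [resTerm, hca _ _ h.2.1, hca _ _ h.2.2.2.1, hca _ _ h.2.2.1]
    ring
  rw [sum_congr rfl hterm, sum_const, nsmul_eq_mul]
  rcases Nat.eq_zero_or_pos j with rfl | hj
  · simp [ha0]
  · rw [card_childTriples hIV hj hjN hn]
    norm_num

theorem sum_parentTriples (hIII : PropIII N Λgen) (hca : ∀ j m, m ∈ Λgen j → c m = a j)
    (haN : a (N + 1) = 0) (hj : 1 ≤ j) (hjN : j ≤ N) (hn : n ∈ Λgen j) :
    ∑ p ∈ parentTriples Λgen j n, resTerm c p = 2 * (a (j + 1) ^ 2 * conj (a j)) := by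
  have hterm : ∀ p ∈ parentTriples Λgen j n, resTerm c p = a (j + 1) ^ 2 * conj (a j) := by
    intro p hp
    have h := mem_parentTriples.mp hp
    rw [resTerm, hca _ _ h.2.1, hca _ _ h.2.2.2.1, hca _ _ h.2.2.2.2]
    ring
  rw [sum_congr rfl hterm, sum_const, nsmul_eq_mul]
  rcases hjN.lt_or_eq with hjN | rfl
  · rw [card_parentTriples hIII hj hjN hn]
    norm_num
  · simp [haN]

theorem I_mul_resRHS_eq_toyRHS (hempty : ∀ j, j = 0 ∨ N < j → Λgen j = ∅)
    (hdisj : ∀ j k, j ≠ k → Disjoint (Λgen j) (Λgen k)) (hIII : PropIII N Λgen)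
    (hIV : PropIV N Λgen) (hVI : PropVI N Λgen) (hca : ∀ j m, m ∈ Λgen j → c m = a j)
    (hc0 : ∀ m, (∀ j, m ∉ Λgen j) → c m = 0) (ha0 : a 0 = 0) (haN : a (N + 1) = 0)
    (hn : n ∈ Λgen j) : Complex.I * resRHS c n = toyRHS a j := by
  obtain ⟨hj, hjN⟩ := one_le_and_le_of_mem hempty hn
  obtain ⟨k, rfl⟩ : ∃ k, j = k + 1 := ⟨j - 1, by omega⟩
  have hsum : ∑' p : GamRes n, resTerm c p =
      ∑ p ∈ childTriples Λgen k n ∪ parentTriples Λgen (k + 1) n, resTerm c p :=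
    tsum_subtype_eq_sum
      (by
        rw [coe_union]
        exact Set.union_subset childTriples_subset_gamRes parentTriples_subset_gamRes)
      fun p hp hne => mem_triples_of_resTerm_ne_zero hempty hdisj hVI hc0 hn hp hne
  rw [resRHS_eq, hsum, sum_union (disjoint_childTriples_parentTriples hdisj),
    sum_childTriples hIV hca ha0 (by omega) hn, sum_parentTriples hIII hca haN hj hjN hn,
    hca _ _ hn, toyRHS, Nat.add_sub_cancel]
  ring

theorem resRHS_eq_zero (hempty : ∀ j, j = 0 ∨ N < j → Λgen j = ∅) (hII : PropII N Λgen)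
    (hc0 : ∀ m, (∀ j, m ∉ Λgen j) → c m = 0) (hn : ∀ j, n ∉ Λgen j) : resRHS c n = 0 := by
  have hterm : ∀ p : GamRes n, resTerm c p = 0 := by
    rintro ⟨p, hp⟩
    by_contra hne
    obtain ⟨h₁, h₂, h₃⟩ := inLam_of_resTerm_ne_zero hempty hc0 hne
    obtain ⟨j, -, -, hj⟩ :=
      (hII _ _ _ _ (mem_gamRes_iff.mp hp).1 (Or.inl ⟨h₁, h₂, h₃⟩)).2.2.2
    exact hn j hj
  rw [resRHS_eq, hc0 n hn, tsum_congr hterm, tsum_zero]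
  simp

end Spread

theorem stmt4_general (N : ℕ) (Λgen : ℕ → Finset (ℤ × ℤ))
    (hempty : ∀ j, j = 0 ∨ N < j → Λgen j = ∅)
    (hdisj : ∀ j k, j ≠ k → Disjoint (Λgen j) (Λgen k))
    (hII : PropII N Λgen) (hIII : PropIII N Λgen) (hIV : PropIV N Λgen)
    (hVI : PropVI N Λgen)
    (b : ℝ → ℕ → ℂ) (hb : IsToySol N b)
    (r : ℝ → (ℤ × ℤ) → ℂ)
    (hr : ∀ (t : ℝ) (j : ℕ) (n : ℤ × ℤ), 1 ≤ j → j ≤ N → n ∈ Λgen j → r t n = b t j)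
    (hr0 : ∀ (t : ℝ) (n : ℤ × ℤ), (∀ j, n ∉ Λgen j) → r t n = 0) :
    ∀ (n : ℤ × ℤ) (t : ℝ),
      HasDerivAt (fun s => r s n) (Complex.I * resRHS (r t) n) t := by
  obtain ⟨hb0, hbN, hbderiv⟩ := hb
  have hrb : ∀ t j m, m ∈ Λgen j → r t m = b t j := fun t j m hm =>
    hr t j m (one_le_and_le_of_mem hempty hm).1 (one_le_and_le_of_mem hempty hm).2 hm
  intro n t
  by_cases hn : ∃ j, n ∈ Λgen j
  · obtain ⟨j, hn⟩ := hn
    obtain ⟨hj, hjN⟩ := one_le_and_le_of_mem hempty hn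
    rw [funext fun s => hrb s j n hn, I_mul_resRHS_eq_toyRHS hempty hdisj hIII hIV hVI (hrb t)
      (hr0 t) (hb0 t) (hbN t (N + 1) N.lt_succ_self) hn]
    exact hbderiv j hj hjN t
  · rw [not_exists] at hn
    rw [funext fun s => hr0 s n hn, resRHS_eq_zero hempty hII (hr0 t) hn, mul_zero]
    exact hasDerivAt_const t 0

/-- A solution of the Toy Model System spread over a frequency set `Λ` with
Properties II–VI yields a solution of the resonant system `RFNLS`. -/
theorem stmt4 (N : ℕ) (hN : 2 ≤ N) (Λgen : ℕ → Finset (ℤ × ℤ))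
    (hempty : ∀ j, j = 0 ∨ N < j → Λgen j = ∅)
    (hdisj : ∀ j k, j ≠ k → Disjoint (Λgen j) (Λgen k))
    (hII : PropII N Λgen) (hIII : PropIII N Λgen) (hIV : PropIV N Λgen)
    (hV : PropV Λgen) (hVI : PropVI N Λgen)
    (b : ℝ → ℕ → ℂ) (hb : IsToySol N b)
    (r : ℝ → (ℤ × ℤ) → ℂ)
    (hr : ∀ (t : ℝ) (j : ℕ) (n : ℤ × ℤ), 1 ≤ j → j ≤ N → n ∈ Λgen j → r t n = b t j)
    (hr0 : ∀ (t : ℝ) (n : ℤ × ℤ), (∀ j, n ∉ Λgen j) → r t n = 0) :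
    ∀ (n : ℤ × ℤ) (t : ℝ),
      HasDerivAt (fun s => r s n) (Complex.I * resRHS (r t) n) t :=
  stmt4_general N Λgen hempty hdisj hII hIII hIV hVI b hb r hr hr0
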